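/- In SU_q(3), the elements z_i := u³_i satisfy the quantum 5-sphere relations: zᵢzⱼ = q zⱼzᵢ for i < j, zᵢ*zⱼ = q zⱼzᵢ* for i ≠ j, [z₁*, z₁] = 0, [z₂*, z₂] = (1−q²)z₁z₁*, [z₃*, z₃] = (1−q²)(z₁z₁* + z₂z₂*), and ∑ᵢ zᵢzᵢ* = 1. -/

import Mathlib

/-!
Write `M j` for the quantum minor of rows `0, 1` on the two columns other than `j`; the
`*`-structure says `star (u 2 j) = (-q) ^ (j - 2) • M j`. Every relation then says how a quantum minor of the
first two rows meets an entry of the third row: it `q`-commutes with the entries in its own columns,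
commutes with those to its left, and has explicit commutators, again expressed through minors, with
those between or to the right of its columns. The sphere relation `∑ zᵢ zᵢ* = 1` is the quantum
determinant expanded along the last row, after moving each `u 2 j` past `M j`.
-/

/-- number of inversions of a permutation of `Fin 3` -/
def inversions (π : Equiv.Perm (Fin 3)) : ℕ :=
  (Finset.univ.filter (fun p : Fin 3 × Fin 3 => p.1 < p.2 ∧ π p.2 < π p.1)).card

/-- the two-element ordered complement of an index in `{0,1,2}` -/
def compl3 (i : Fin 3) : Fin 3 × Fin 3 :=
  if i = 0 then (1, 2) else if i = 1 then (0, 2) else (0, 1)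

section

variable {ι A : Type*} [LinearOrder ι] [Ring A] [Algebra ℂ A]

def qMinor (q : ℂ) (u : ι → ι → A) (i₁ i₂ j₁ j₂ : ι) : A :=
  u i₁ j₁ * u i₂ j₂ - q • (u i₁ j₂ * u i₂ j₁)

structure IsQuantumMatrix (q : ℝ) (u : ι → ι → A) : Prop where
  col_mul : ∀ i j k, i < j → u i k * u j k = (q : ℂ) • (u j k * u i k)
  row_mul : ∀ i j k, i < j → u k i * u k j = (q : ℂ) • (u k j * u k i)
  commute_antidiag : ∀ i j k l, i < j → k < l → u i l * u j k = u j k * u i l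
  commutator_diag : ∀ i j k l, i < j → k < l →
    u i k * u j l - u j l * u i k = ((q - q⁻¹ : ℝ) : ℂ) • (u i l * u j k)

namespace IsQuantumMatrix

variable {q : ℝ} {u : ι → ι → A} {i₁ i₂ k a b c : ι}

theorem mul_diag (hu : IsQuantumMatrix q u) {i j k l : ι} (hij : i < j) (hkl : k < l) :
    u i k * u j l = u j l * u i k + ((q - q⁻¹ : ℝ) : ℂ) • (u i l * u j k) :=
  sub_eq_iff_eq_add'.mp (hu.commutator_diag i j k l hij hkl)

theorem qMinor_mul_left (hu : IsQuantumMatrix q u) (h₁ : i₁ < k) (h₂ : i₂ < k) (hab : a < b) :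
    qMinor q u i₁ i₂ a b * u k a = (q : ℂ) • (u k a * qMinor q u i₁ i₂ a b) := by
  have e₁ : u i₁ a * u i₂ b * u k a = (q : ℂ) • (u k a * (u i₁ a * u i₂ b)) := by
    rw [mul_assoc, hu.commute_antidiag i₂ k a b h₂ hab, ← mul_assoc, hu.col_mul i₁ k a h₁,
      smul_mul_assoc, mul_assoc]
  have e₂ : u i₁ b * u i₂ a * u k a = (q : ℂ) • (u k a * (u i₁ b * u i₂ a)) := by
    rw [mul_assoc, hu.col_mul i₂ k a h₂, mul_smul_comm, ← mul_assoc,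
      hu.commute_antidiag i₁ k a b h₁ hab, mul_assoc]
  rw [qMinor, sub_mul, smul_mul_assoc, e₁, e₂, mul_sub, mul_smul_comm, smul_sub]

theorem qMinor_mul_right (hu : IsQuantumMatrix q u) (h₁ : i₁ < k) (h₂ : i₂ < k) (hab : a < b) :
    qMinor q u i₁ i₂ a b * u k b = (q : ℂ) • (u k b * qMinor q u i₁ i₂ a b) := by
  set κ : ℂ := ((q - q⁻¹ : ℝ) : ℂ)
  have e₁ : u i₁ a * u i₂ b * u k b
      = (q : ℂ) • (u k b * (u i₁ a * u i₂ b)) + ((q : ℂ) * κ) • (u i₁ b * (u i₂ b * u k a)) := by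
    rw [mul_assoc, hu.col_mul i₂ k b h₂, mul_smul_comm, ← mul_assoc, hu.mul_diag h₁ hab, add_mul,
      smul_mul_assoc, mul_assoc (u i₁ b), hu.commute_antidiag i₂ k a b h₂ hab, smul_add, smul_smul,
      mul_assoc]
  have e₂ : u i₁ b * u i₂ a * u k b
      = (q : ℂ) • (u k b * (u i₁ b * u i₂ a)) + κ • (u i₁ b * (u i₂ b * u k a)) := by
    rw [mul_assoc, hu.mul_diag h₂ hab, mul_add, mul_smul_comm, ← mul_assoc,
      hu.col_mul i₁ k b h₁, smul_mul_assoc, mul_assoc]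
  rw [qMinor, sub_mul, smul_mul_assoc, e₁, e₂]
  simp only [mul_sub, mul_smul_comm, smul_sub, smul_add, smul_smul]
  module

theorem qMinor_commute_of_lt (hu : IsQuantumMatrix q u) (h₁ : i₁ < k) (h₂ : i₂ < k)
    (hca : c < a) (hab : a < b) : Commute (qMinor q u i₁ i₂ a b) (u k c) := by
  have hcb := hca.trans hab
  have e₁ : u i₁ a * u i₂ b * u k c = u k c * (u i₁ a * u i₂ b) := by
    rw [mul_assoc, hu.commute_antidiag i₂ k c b h₂ hcb, ← mul_assoc,
      hu.commute_antidiag i₁ k c a h₁ hca, mul_assoc]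
  have e₂ : u i₁ b * u i₂ a * u k c = u k c * (u i₁ b * u i₂ a) := by
    rw [mul_assoc, hu.commute_antidiag i₂ k c a h₂ hca, ← mul_assoc,
      hu.commute_antidiag i₁ k c b h₁ hcb, mul_assoc]
  rw [Commute, SemiconjBy, qMinor, sub_mul, smul_mul_assoc, e₁, e₂, mul_sub, mul_smul_comm]

theorem qMinor_commutator_of_between (hu : IsQuantumMatrix q u) (h₁ : i₁ < k) (h₂ : i₂ < k)
    (hac : a < c) (hcb : c < b) :
    qMinor q u i₁ i₂ a b * u k c - u k c * qMinor q u i₁ i₂ a b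
      = ((q - q⁻¹ : ℝ) : ℂ) • (qMinor q u i₁ i₂ c b * u k a) := by
  have hab := hac.trans hcb
  set κ : ℂ := ((q - q⁻¹ : ℝ) : ℂ)
  have e₁ : u i₁ a * u i₂ b * u k c
      = u k c * (u i₁ a * u i₂ b) + κ • (u i₁ c * u i₂ b * u k a) := by
    rw [mul_assoc, hu.commute_antidiag i₂ k c b h₂ hcb, ← mul_assoc, hu.mul_diag h₁ hac, add_mul,
      smul_mul_assoc, mul_assoc (u i₁ c), ← hu.commute_antidiag i₂ k a b h₂ hab, mul_assoc,
      ← mul_assoc (u i₁ c)]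
  have e₂ : u i₁ b * u i₂ a * u k c
      = u k c * (u i₁ b * u i₂ a) + κ • (u i₁ b * (u i₂ c * u k a)) := by
    rw [mul_assoc, hu.mul_diag h₂ hac, mul_add, mul_smul_comm, ← mul_assoc,
      hu.commute_antidiag i₁ k c b h₁ hcb, mul_assoc]
  rw [qMinor, qMinor, sub_mul, smul_mul_assoc, e₁, e₂, sub_mul, smul_mul_assoc]
  simp only [mul_sub, mul_smul_comm, smul_sub, smul_add, smul_smul, mul_assoc]
  module

theorem qMinor_commutator_of_gt (hu : IsQuantumMatrix q u) (hq : q ≠ 0) (h₁ : i₁ < k)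
    (h₂ : i₂ < k) (hab : a < b) (hbc : b < c) :
    qMinor q u i₁ i₂ a b * u k c - u k c * qMinor q u i₁ i₂ a b
      = ((q - q⁻¹ : ℝ) : ℂ) • (qMinor q u i₁ i₂ a c * u k b)
        - ((q : ℂ) * ((q - q⁻¹ : ℝ) : ℂ)) • (qMinor q u i₁ i₂ b c * u k a) := by
  have hac := hab.trans hbc
  set κ : ℂ := ((q - q⁻¹ : ℝ) : ℂ)
  have hκ : 1 + (q : ℂ) * κ = (q : ℂ) ^ 2 := by
    have : (q : ℂ) ≠ 0 := by exact_mod_cast hq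
    simp only [κ]; push_cast; field_simp; ring
  have e₀ : u k b * u i₂ a = u i₂ a * u k b - κ • (u i₂ b * u k a) := by
    rw [hu.mul_diag h₂ hab]; abel
  have e₁ : u i₁ a * u i₂ b * u k c
      = u k c * (u i₁ a * u i₂ b) + κ • (u i₁ c * u i₂ b * u k a)
        + κ • (u i₁ a * (u i₂ c * u k b)) := by
    rw [mul_assoc, hu.mul_diag h₂ hbc, mul_add, mul_smul_comm, ← mul_assoc, hu.mul_diag h₁ hac,
      add_mul, smul_mul_assoc, mul_assoc (u i₁ c) (u k a), ← hu.commute_antidiag i₂ k a b h₂ hab,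
      mul_assoc, ← mul_assoc (u i₁ c) (u i₂ b)]
  have e₂ : u i₁ b * u i₂ a * u k c
      = u k c * (u i₁ b * u i₂ a) + κ • (u i₁ c * (u i₂ a * u k b))
        - (κ * κ) • (u i₁ c * (u i₂ b * u k a)) + κ • (u i₁ b * (u i₂ c * u k a)) := by
    rw [mul_assoc, hu.mul_diag h₂ hac, mul_add, mul_smul_comm, ← mul_assoc, hu.mul_diag h₁ hbc,
      add_mul, smul_mul_assoc, mul_assoc (u i₁ c) (u k b), e₀, mul_sub, smul_sub, mul_assoc,
      mul_smul_comm κ (u i₁ c), smul_smul]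
    abel
  rw [qMinor, qMinor, qMinor, sub_mul, smul_mul_assoc, e₁, e₂]
  simp only [sub_mul, smul_mul_assoc, mul_sub, mul_smul_comm, smul_sub, smul_add, smul_smul,
    mul_assoc]
  match_scalars <;> first | ring1 | linear_combination κ * hκ

end IsQuantumMatrix

open Equiv in
theorem sum_perm_inversions_eq_qMinor_expansion (q : ℂ) (u : Fin 3 → Fin 3 → A) :
    ∑ π : Perm (Fin 3), (-q) ^ inversions π • (u 0 (π 0) * u 1 (π 1) * u 2 (π 2))
      = qMinor q u 0 1 0 1 * u 2 2 - q • (qMinor q u 0 1 0 2 * u 2 1)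
        + q ^ 2 • (qMinor q u 0 1 1 2 * u 2 0) := by
  have huniv : (Finset.univ : Finset (Perm (Fin 3))) = {1, swap 0 1, swap 0 2, swap 1 2,
      swap 0 1 * swap 1 2, swap 1 2 * swap 0 1} := by decide
  obtain ⟨h₁, h₂, h₃, h₄, h₅, h₆⟩ : inversions 1 = 0 ∧ inversions (swap 0 1) = 1 ∧
      inversions (swap 0 2) = 3 ∧ inversions (swap 1 2) = 1 ∧
      inversions (swap 0 1 * swap 1 2) = 2 ∧ inversions (swap 1 2 * swap 0 1) = 2 := by decide
  rw [huniv]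
  simp +decide only [Finset.sum_insert, Finset.mem_insert,
    Finset.mem_singleton, Finset.sum_singleton, h₁, h₂, h₃, h₄, h₅, h₆, Perm.one_apply,
    Perm.mul_apply, swap_apply_def, ↓reduceIte]
  simp only [qMinor, sub_mul, smul_mul_assoc, smul_sub, smul_smul]
  match_scalars <;> ring

theorem IsQuantumMatrix.qMinor_compl3_mul_of_ne {q : ℝ} {u : Fin 3 → Fin 3 → A}
    (hu : IsQuantumMatrix q u) {i j : Fin 3} (hij : i ≠ j) :
    qMinor q u 0 1 (compl3 i).1 (compl3 i).2 * u 2 j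
      = (q : ℂ) • (u 2 j * qMinor q u 0 1 (compl3 i).1 (compl3 i).2) := by
  fin_cases i <;> fin_cases j <;> first
    | exact absurd rfl hij
    | exact hu.qMinor_mul_left (by decide) (by decide) (by decide)
    | exact hu.qMinor_mul_right (by decide) (by decide) (by decide)

end

theorem stmt_15_general {A : Type*} [Ring A] [Algebra ℂ A] [StarRing A]
    (q : ℝ) (hq0 : 0 < q) (u : Fin 3 → Fin 3 → A)
    (hcol : ∀ i j k : Fin 3, i < j → u i k * u j k = (q : ℂ) • (u j k * u i k))
    (hrow : ∀ i j k : Fin 3, i < j → u k i * u k j = (q : ℂ) • (u k j * u k i))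
    (hcomm1 : ∀ i j k l : Fin 3, i < j → k < l → u i l * u j k = u j k * u i l)
    (hcomm2 : ∀ i j k l : Fin 3, i < j → k < l →
      u i k * u j l - u j l * u i k = ((q - q⁻¹ : ℝ) : ℂ) • (u i l * u j k))
    (hdet : ∑ π : Equiv.Perm (Fin 3),
      ((-(q : ℂ)) ^ inversions π) • (u 0 (π 0) * u 1 (π 1) * u 2 (π 2)) = 1)
    (hstar : ∀ i j : Fin 3, star (u i j) =
      ((-(q : ℂ)) ^ ((j : ℤ) - (i : ℤ))) •
        (u (compl3 i).1 (compl3 j).1 * u (compl3 i).2 (compl3 j).2 -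
          (q : ℂ) • (u (compl3 i).1 (compl3 j).2 * u (compl3 i).2 (compl3 j).1)))
    (z : Fin 3 → A) (hz : ∀ i, z i = u 2 i) :
    (∀ i j : Fin 3, i < j → z i * z j = (q : ℂ) • (z j * z i)) ∧
    (∀ i j : Fin 3, i ≠ j → star (z i) * z j = (q : ℂ) • (z j * star (z i))) ∧
    (star (z 0) * z 0 = z 0 * star (z 0)) ∧
    (star (z 1) * z 1 - z 1 * star (z 1) = ((1 - q ^ 2 : ℝ) : ℂ) • (z 0 * star (z 0))) ∧
    (star (z 2) * z 2 - z 2 * star (z 2) =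
      ((1 - q ^ 2 : ℝ) : ℂ) • (z 0 * star (z 0) + z 1 * star (z 1))) ∧
    (z 0 * star (z 0) + z 1 * star (z 1) + z 2 * star (z 2) = 1) := by
  have hu : IsQuantumMatrix q u := ⟨hcol, hrow, hcomm1, hcomm2⟩
  rw [sum_perm_inversions_eq_qMinor_expansion] at hdet
  have hstar₂ (j : Fin 3) : star (u 2 j) =
      (-(q : ℂ)) ^ ((j : ℤ) - 2) • qMinor q u 0 1 (compl3 j).1 (compl3 j).2 := hstar 2 j
  have hs₀ : star (u 2 0) = ((q : ℂ) ^ 2)⁻¹ • qMinor q u 0 1 1 2 := by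
    rw [hstar₂]; norm_num [compl3, Fin.ext_iff]
  have hs₁ : star (u 2 1) = (-(q : ℂ)⁻¹) • qMinor q u 0 1 0 2 := by
    rw [hstar₂]; norm_num [compl3, Fin.ext_iff]
  have hs₂ : star (u 2 2) = qMinor q u 0 1 0 1 := by
    rw [hstar₂]; norm_num [compl3, Fin.ext_iff]
  have hc₀ := hu.qMinor_commute_of_lt (i₁ := 0) (i₂ := 1) (k := 2) (c := 0) (a := 1) (b := 2)
    (by decide) (by decide) (by decide) (by decide)
  have hc₁ := hu.qMinor_commutator_of_between (i₁ := 0) (i₂ := 1) (k := 2) (a := 0) (c := 1)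
    (b := 2) (by decide) (by decide) (by decide) (by decide)
  have hc₂ := hu.qMinor_commutator_of_gt hq0.ne' (i₁ := 0) (i₂ := 1) (k := 2) (a := 0) (b := 1)
    (c := 2) (by decide) (by decide) (by decide) (by decide)
  set M₀ := qMinor q u 0 1 1 2
  set M₁ := qMinor q u 0 1 0 2
  set M₂ := qMinor q u 0 1 0 1
  have hq : (q : ℂ) ≠ 0 := by exact_mod_cast hq0.ne'
  have mul_eq_sub_commutator (x y : A) : y * x = x * y - (x * y - y * x) :=
    (sub_sub_cancel _ _).symm
  simp only [hz]
  refine ⟨fun i j hij => hu.row_mul i j 2 hij, fun i j hij => ?_, ?_, ?_, ?_, ?_⟩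
  · rw [hstar₂, smul_mul_assoc, hu.qMinor_compl3_mul_of_ne hij, mul_smul_comm, smul_comm]
  · rw [hs₀, smul_mul_assoc, mul_smul_comm, hc₀.eq]
  · rw [hs₁, hs₀, smul_mul_assoc, mul_smul_comm, ← smul_sub, hc₁, mul_smul_comm, ← hc₀.eq]
    match_scalars
    field_simp
    ring
  · rw [hs₂, hs₁, hs₀, hc₂, mul_smul_comm, mul_smul_comm, ← hc₀.eq, mul_eq_sub_commutator M₁,
      hc₁]
    match_scalars <;> field_simp <;> ring
  · rw [hs₀, hs₁, hs₂, mul_smul_comm, mul_smul_comm, ← hc₀.eq, mul_eq_sub_commutator M₁, hc₁,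
      mul_eq_sub_commutator M₂, hc₂, ← hdet]
    match_scalars <;> field_simp <;> ring

/-- In `SU_q(3)`, the elements `zᵢ := u³ᵢ` satisfy the quantum 5-sphere relations. -/
theorem stmt_15 {A : Type*} [Ring A] [Algebra ℂ A] [StarRing A]
    (q : ℝ) (hq0 : 0 < q) (hq1 : q < 1) (u : Fin 3 → Fin 3 → A)
    (hcol : ∀ i j k : Fin 3, i < j → u i k * u j k = (q : ℂ) • (u j k * u i k))
    (hrow : ∀ i j k : Fin 3, i < j → u k i * u k j = (q : ℂ) • (u k j * u k i))
    (hcomm1 : ∀ i j k l : Fin 3, i < j → k < l → u i l * u j k = u j k * u i l)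
    (hcomm2 : ∀ i j k l : Fin 3, i < j → k < l →
      u i k * u j l - u j l * u i k = ((q - q⁻¹ : ℝ) : ℂ) • (u i l * u j k))
    (hdet : ∑ π : Equiv.Perm (Fin 3),
      ((-(q : ℂ)) ^ inversions π) • (u 0 (π 0) * u 1 (π 1) * u 2 (π 2)) = 1)
    (hstar : ∀ i j : Fin 3, star (u i j) =
      ((-(q : ℂ)) ^ ((j : ℤ) - (i : ℤ))) •
        (u (compl3 i).1 (compl3 j).1 * u (compl3 i).2 (compl3 j).2 -
          (q : ℂ) • (u (compl3 i).1 (compl3 j).2 * u (compl3 i).2 (compl3 j).1)))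
    (z : Fin 3 → A) (hz : ∀ i, z i = u 2 i) :
    (∀ i j : Fin 3, i < j → z i * z j = (q : ℂ) • (z j * z i)) ∧
    (∀ i j : Fin 3, i ≠ j → star (z i) * z j = (q : ℂ) • (z j * star (z i))) ∧
    (star (z 0) * z 0 = z 0 * star (z 0)) ∧
    (star (z 1) * z 1 - z 1 * star (z 1) = ((1 - q ^ 2 : ℝ) : ℂ) • (z 0 * star (z 0))) ∧
    (star (z 2) * z 2 - z 2 * star (z 2) =
      ((1 - q ^ 2 : ℝ) : ℂ) • (z 0 * star (z 0) + z 1 * star (z 1))) ∧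
    (z 0 * star (z 0) + z 1 * star (z 1) + z 2 * star (z 2) = 1) :=
  stmt_15_general q hq0 u hcol hrow hcomm1 hcomm2 hdet hstar z hz
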